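/- In the Lie superalgebra osp(1|2n) realized by (2n+1)×(2n+1) matrices with rows/columns indexed 0,…,2n, the elements b_k^+ = √2(e_{0,n+k} + e_{k,0}) and b_k^− = √2(e_{0,k} − e_{n+k,0}) satisfy the paraboson triple relations [{b_j^ξ, b_k^η}, b_l^ε] = (ε−ξ)δ_{jl} b_k^η + (ε−η)δ_{kl} b_j^ξ, where brackets of odd elements are anticommutators of matrices and the outer bracket is the matrix commutator. -/

import Mathlib

/-!
Write `b_a = √2 • B_a` with `B_a = E_{0,p(a)} + s(a) E_{p(a*),0}`, where `a = (k, ξ)`,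
`a* = (k, ¬ξ)`, `s(k, ξ) = sgn ξ`, and `p(k, +) = n+1+k`, `p(k, -) = k+1` is the column of the
nonzero entry of row `0`. Since `p` is injective and avoids `0`, products of matrix units give
`{B_a, B_b} = s(a) E_{p(a*),p(b)} + s(b) E_{p(b*),p(a)}`: the `E_{00}` terms cancel because
`s(a*) = -s(a)`. Commuting with `B_c` then gives
`[{B_a, B_b}, B_c] = s(c) δ_{a,c*} B_b + s(c) δ_{b,c*} B_a`, and the factor `(√2)³ = 2√2` is
absorbed by `ε - ξ = 2 ε δ_{ξ,¬ε}`.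
-/

/-- Sign of a boolean: `true ↦ +1`, `false ↦ -1`. -/
def sgn (s : Bool) : ℤ := if s then 1 else -1

/-- The odd elements `b_k^+ = √2(e_{0,n+k} + e_{k,0})` and `b_k^- = √2(e_{0,k} − e_{n+k,0})`
of `osp(1|2n)`, realized as `(2n+1)×(2n+1)` complex matrices (indices `0,…,2n`). -/
noncomputable def ospB (n : ℕ) (k : Fin n) : Bool → Matrix (Fin (2 * n + 1)) (Fin (2 * n + 1)) ℂ
  | true => (Real.sqrt 2 : ℂ) •
      (Matrix.single ⟨0, by omega⟩ ⟨n + 1 + k.val, by omega⟩ 1 +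
       Matrix.single ⟨k.val + 1, by omega⟩ ⟨0, by omega⟩ 1)
  | false => (Real.sqrt 2 : ℂ) •
      (Matrix.single ⟨0, by omega⟩ ⟨k.val + 1, by omega⟩ 1 -
       Matrix.single ⟨n + 1 + k.val, by omega⟩ ⟨0, by omega⟩ 1)

open Matrix

theorem Matrix.single_mul_single_eq_ite {l m n α : Type*} [Fintype m] [DecidableEq l]
    [DecidableEq m] [DecidableEq n] [NonUnitalNonAssocSemiring α]
    (i : l) (j j' : m) (k : n) (c d : α) :
    single i j c * single j' k d = if j = j' then single i k (c * d) else 0 := by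
  split_ifs with h
  · rw [h, single_mul_single_same]
  · simp [h]

section OddMatrix

attribute [local instance] LieRing.ofAssociativeRing

variable {ι κ R : Type*} [Fintype ι] [DecidableEq ι] [DecidableEq κ] [CommRing R]

def oddMatrix (o : ι) (p : κ → ι) (dual : κ → κ) (s : κ → R) (a : κ) : Matrix ι ι R :=
  single o (p a) 1 + s a • single (p (dual a)) o 1

variable {o : ι} {p : κ → ι} {dual : κ → κ} {s : κ → R}

theorem oddMatrix_mul_oddMatrix (hp : p.Injective) (ho : ∀ a, p a ≠ o) (a b : κ) :
    oddMatrix o p dual s a * oddMatrix o p dual s b =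
      (if a = dual b then s b else 0) • single o o 1 + s a • single (p (dual a)) (p b) 1 := by
  simp only [oddMatrix, add_mul, mul_add, smul_mul_assoc, mul_smul_comm, single_mul_single_eq_ite,
    hp.eq_iff, ho, (ho _).symm, if_false, if_true, mul_one, smul_zero, zero_add, add_zero,
    ite_smul, zero_smul, smul_ite]
  abel

theorem oddMatrix_anticomm (hp : p.Injective) (ho : ∀ a, p a ≠ o) (hdual : dual.Involutive)
    (hs : ∀ a, s (dual a) = -s a) (a b : κ) :
    oddMatrix o p dual s a * oddMatrix o p dual s b +
        oddMatrix o p dual s b * oddMatrix o p dual s a =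
      s a • single (p (dual a)) (p b) 1 + s b • single (p (dual b)) (p a) 1 := by
  rw [oddMatrix_mul_oddMatrix hp ho, oddMatrix_mul_oddMatrix hp ho]
  by_cases hab : a = dual b
  · subst hab
    simp only [hdual b, if_true, hs]
    module
  · have hba : b ≠ dual a := fun h => hab (h ▸ (hdual a).symm)
    simp only [hab, hba, if_false, zero_smul, zero_add]

theorem single_lie_oddMatrix (hp : p.Injective) (ho : ∀ a, p a ≠ o) (a b c : κ) :
    ⁅single (p (dual a)) (p b) (1 : R), oddMatrix o p dual s c⁆ =
      (if b = dual c then s c else 0) • single (p (dual a)) o 1 -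
        (if c = dual a then (1 : R) else 0) • single o (p b) 1 := by
  simp only [Ring.lie_def, oddMatrix, add_mul, mul_add, smul_mul_assoc, mul_smul_comm,
    single_mul_single_eq_ite, hp.eq_iff, ho, (ho _).symm, if_false, mul_one, smul_zero, zero_add,
    add_zero, ite_smul, zero_smul, smul_ite, one_smul]

theorem oddMatrix_triple (hp : p.Injective) (ho : ∀ a, p a ≠ o) (hdual : dual.Involutive)
    (hs : ∀ a, s (dual a) = -s a) (a b c : κ) :
    ⁅oddMatrix o p dual s a * oddMatrix o p dual s b +
        oddMatrix o p dual s b * oddMatrix o p dual s a, oddMatrix o p dual s c⁆ =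
      (if a = dual c then s c else 0) • oddMatrix o p dual s b +
        (if b = dual c then s c else 0) • oddMatrix o p dual s a := by
  rw [oddMatrix_anticomm hp ho hdual hs, add_lie, smul_lie, smul_lie, single_lie_oddMatrix hp ho,
    single_lie_oddMatrix hp ho]
  simp only [@eq_comm _ c, hdual.eq_iff]
  obtain rfl | ha := eq_or_ne a (dual c) <;> obtain rfl | hb := eq_or_ne b (dual c)
  · simp only [oddMatrix, hdual c, hs, if_true]
    module
  · simp only [oddMatrix, hdual c, hs, if_true, hb, if_false, zero_smul, sub_zero]
    module
  · simp only [oddMatrix, hdual c, hs, if_true, ha, if_false, zero_smul, sub_zero]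
    module
  · simp only [ha, hb, if_false, zero_smul, smul_zero, sub_zero, add_zero]

theorem lie_anticomm_smul {A : Type*} [Ring A] [Algebra R A] (t : R) (x y z : A) :
    ⁅(t • x) * (t • y) + (t • y) * (t • x), t • z⁆ = t ^ 3 • ⁅x * y + y * x, z⁆ := by
  simp only [Ring.lie_def, add_mul, mul_add, smul_mul_assoc, mul_smul_comm, smul_add, smul_sub,
    smul_smul]
  module

end OddMatrix

theorem sgn_not (ξ : Bool) : sgn (!ξ) = -sgn ξ := by
  cases ξ <;> rfl

theorem sgn_sub_sgn_smul_ite {α M : Type*} [DecidableEq α] [AddCommGroup M] [Module ℂ M]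
    (j l : α) (ξ ε : Bool) (x : M) :
    ((sgn ε - sgn ξ : ℤ) : ℂ) • (if j = l then x else 0) =
      (2 * if (j, ξ) = (l, !ε) then (sgn ε : ℂ) else 0) • x := by
  by_cases h : j = l <;> cases ξ <;> cases ε <;> simp [h, sgn]

def ospCol (n : ℕ) : Fin n × Bool → Fin (2 * n + 1)
  | (k, true) => ⟨n + 1 + k, by omega⟩
  | (k, false) => ⟨k + 1, by omega⟩

theorem ospCol_injective (n : ℕ) : (ospCol n).Injective := by
  rintro ⟨⟨j, hj⟩, _ | _⟩ ⟨⟨k, hk⟩, _ | _⟩ h <;> simp only [ospCol, Fin.mk.injEq] at h <;>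
    simp only [Prod.mk.injEq, Fin.ext_iff, and_true, and_false, Bool.false_eq_true,
      Bool.true_eq_false] <;> omega

theorem ospCol_ne_zero (n : ℕ) (a : Fin n × Bool) : ospCol n a ≠ 0 := by
  rcases a with ⟨k, _ | _⟩ <;> simp [ospCol, Fin.ext_iff]

theorem ospB_eq_smul_oddMatrix (n : ℕ) (k : Fin n) (ξ : Bool) :
    ospB n k ξ = (Real.sqrt 2 : ℂ) •
      oddMatrix 0 (ospCol n) (fun a => (a.1, !a.2)) (fun a => (sgn a.2 : ℂ)) (k, ξ) := by
  cases ξ <;> simp [ospB, oddMatrix, ospCol, sgn, sub_eq_add_neg]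

/-- The matrices `b_k^±` satisfy the paraboson triple relations
`[{b_j^ξ, b_k^η}, b_l^ε] = (ε−ξ)δ_{jl} b_k^η + (ε−η)δ_{kl} b_j^ξ`. -/
theorem osp_matrices_triple_relations (n : ℕ) (ξ η ε : Bool) (j k l : Fin n) :
    (ospB n j ξ * ospB n k η + ospB n k η * ospB n j ξ) * ospB n l ε -
        ospB n l ε * (ospB n j ξ * ospB n k η + ospB n k η * ospB n j ξ) =
      ((sgn ε - sgn ξ : ℤ) : ℂ) • (if j = l then ospB n k η else 0) +
        ((sgn ε - sgn η : ℤ) : ℂ) • (if k = l then ospB n j ξ else 0) := by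
  have hsqrt : (Real.sqrt 2 : ℂ) ^ 3 = 2 * Real.sqrt 2 := by
    rw [pow_succ, ← Complex.ofReal_pow, Real.sq_sqrt zero_le_two, Complex.ofReal_ofNat]
  simp only [← Ring.lie_def, ospB_eq_smul_oddMatrix]
  rw [lie_anticomm_smul, oddMatrix_triple (ospCol_injective n) (ospCol_ne_zero n)
    (fun _ => by simp) (fun a => by simp [sgn_not]), sgn_sub_sgn_smul_ite, sgn_sub_sgn_smul_ite,
    hsqrt]
  module
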